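/- Let R be a ring (associative with identity, not necessarily commutative). Then R is an abelian ring in which every zero-divisor is a very idempotent or nilpotent if and only if R is isomorphic (as a ring) to one of the following: (a) a D-ring; (b) a Boolean ring; (c) ℤ/3ℤ × ℤ/3ℤ; or (d) ℤ/3ℤ × B where B is a Boolean ring. -/

import Mathlib

/-!
If `0` and `1` are the only idempotents, then `±1` are the only very idempotents that could be
zero-divisors, and they are units, so every zero-divisor is nilpotent.

Otherwise fix an idempotent `e ≠ 0, 1`; it is central. Every `e * x` is a zero-divisor (killed by
`1 - e`), and for a unit `u` this forces `e * u = ± e`. Taking `u = 1 ± n` with `n` nilpotent gives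
`e * n = 0`, and likewise `(1 - e) * n = 0`, so `R` is reduced. Hence every `e * x` and
`(1 - e) * x` is very idempotent, so `x ^ 3 = x` on `R`, and in particular `6 = 0`. The central
idempotent `4` splits `R` into the corner `(1 - 4) R`, which is Boolean, and the corner `4 R`, of
characteristic `3`. In a corner `c R` of characteristic `3` with `c ≠ 1`, an idempotent `a` makes
`1 + a` an involution, so `c + a = ± c` and `c R = {0, c, -c} ≅ ℤ/3ℤ`. According as `4 = 0`,
`4 = 1` (then split along `e` instead) or neither, `R` is Boolean, `ℤ/3ℤ × ℤ/3ℤ` or `ℤ/3ℤ × B`.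
-/

universe u v

/-- An element `e` is a very idempotent if `e` or `-e` is an idempotent. -/
def IsVeryIdempotent {R : Type u} [Ring R] (e : R) : Prop :=
  IsIdempotentElem e ∨ IsIdempotentElem (-e)

/-- `a` is uniquely weakly nil-clean: it is a sum of a nilpotent and a very idempotent,
and for any two such representations `a = w₁ + e₁ = w₂ + e₂` one has `e₁ ^ 2 = e₂ ^ 2`. -/
def IsUniquelyWeaklyNilClean {R : Type u} [Ring R] (a : R) : Prop :=
  (∃ w e : R, IsNilpotent w ∧ IsVeryIdempotent e ∧ a = w + e) ∧
  ∀ w₁ e₁ w₂ e₂ : R, IsNilpotent w₁ → IsVeryIdempotent e₁ → IsNilpotent w₂ →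
    IsVeryIdempotent e₂ → a = w₁ + e₁ → a = w₂ + e₂ → e₁ ^ 2 = e₂ ^ 2

/-- A ring is uniquely weakly nil-clean if every element is. -/
def UniquelyWeaklyNilCleanRing (R : Type u) [Ring R] : Prop :=
  ∀ a : R, IsUniquelyWeaklyNilClean a

/-- `a` is uniquely nil-clean: it is a sum of a nilpotent and an idempotent,
and for any two such representations `a = w₁ + e₁ = w₂ + e₂` one has `e₁ = e₂`. -/
def IsUniquelyNilClean {R : Type u} [Ring R] (a : R) : Prop :=
  (∃ w e : R, IsNilpotent w ∧ IsIdempotentElem e ∧ a = w + e) ∧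
  ∀ w₁ e₁ w₂ e₂ : R, IsNilpotent w₁ → IsIdempotentElem e₁ → IsNilpotent w₂ →
    IsIdempotentElem e₂ → a = w₁ + e₁ → a = w₂ + e₂ → e₁ = e₂

/-- A ring is uniquely nil-clean if every element is. -/
def UniquelyNilCleanRing (R : Type u) [Ring R] : Prop :=
  ∀ a : R, IsUniquelyNilClean a

/-- `a` is a zero-divisor: there are nonzero `b, c` with `a * b = 0` and `c * a = 0`. -/
def IsZeroDivisorPair {R : Type u} [Ring R] (a : R) : Prop :=
  ∃ b c : R, b ≠ 0 ∧ c ≠ 0 ∧ a * b = 0 ∧ c * a = 0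

/-- A ring is abelian if every idempotent is central. -/
def AbelianRing (R : Type u) [Ring R] : Prop :=
  ∀ e : R, IsIdempotentElem e → ∀ x : R, e * x = x * e

/-- A ring is periodic if every element satisfies `a ^ m = a ^ n` for distinct positive `m, n`. -/
def PeriodicRing (R : Type u) [Ring R] : Prop :=
  ∀ a : R, ∃ m n : ℕ, 0 < m ∧ 0 < n ∧ m ≠ n ∧ a ^ m = a ^ n

/-- A Boolean ring: every element is idempotent. -/
def IsBooleanRing (R : Type u) [Ring R] : Prop :=
  ∀ a : R, IsIdempotentElem a

/-- `R / J(R)` is isomorphic to `S`, expressed via a surjective ring homomorphism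
whose kernel is exactly the Jacobson radical of `R`. -/
def QuotJacobsonIsoTo (R : Type u) [Ring R] (S : Type v) [Ring S] : Prop :=
  ∃ f : R →+* S, Function.Surjective f ∧
    ∀ a : R, f a = 0 ↔ a ∈ Ideal.jacobson (⊥ : Ideal R)

def ZeroDivisorsVeryIdempotentOrNilpotent (R : Type u) [Ring R] : Prop :=
  ∀ a : R, IsZeroDivisorPair a → IsVeryIdempotent a ∨ IsNilpotent a

section Basic

variable {R : Type u} [Ring R] {S : Type v} [Ring S]

lemma IsVeryIdempotent.map {F : Type*} [FunLike F R S] [RingHomClass F R S] (f : F) {a : R}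
    (ha : IsVeryIdempotent a) : IsVeryIdempotent (f a) := by
  rcases ha with h | h
  · exact .inl (h.map f)
  · exact .inr (by simpa only [map_neg] using h.map f)

lemma IsVeryIdempotent.pow_three {a : R} (ha : IsVeryIdempotent a) : a ^ 3 = a := by
  rcases ha with h | h
  · exact h.pow_succ_eq 2
  · simpa only [Odd.neg_pow (by decide : Odd 3), neg_inj] using h.pow_succ_eq 2

lemma IsVeryIdempotent.prod_of_isBooleanRing {s : R} (hs : IsVeryIdempotent s)
    (hB : IsBooleanRing S) (b : S) : IsVeryIdempotent (s, b) := by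
  rcases hs with h | h
  · exact .inl (Prod.ext h.eq (hB b).eq)
  · exact .inr (Prod.ext h.eq (hB (-b)).eq)

lemma isVeryIdempotent_zmod_three (z : ZMod 3) : IsVeryIdempotent z := by
  unfold IsVeryIdempotent IsIdempotentElem
  revert z
  decide

lemma IsZeroDivisorPair.map (E : R ≃+* S) {a : R} (ha : IsZeroDivisorPair a) :
    IsZeroDivisorPair (E a) := by
  obtain ⟨b, c, hb, hc, hab0, hca0⟩ := ha
  exact ⟨E b, E c, (map_ne_zero_iff E E.injective).mpr hb, (map_ne_zero_iff E E.injective).mpr hc,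
    by rw [← map_mul, hab0, map_zero], by rw [← map_mul, hca0, map_zero]⟩

lemma IsZeroDivisorPair.not_isUnit {a : R} (ha : IsZeroDivisorPair a) : ¬ IsUnit a := by
  rintro ⟨u, rfl⟩
  obtain ⟨b, -, hb, -, hub, -⟩ := ha
  exact hb (by simpa using congrArg ((↑u⁻¹ : R) * ·) hub)

lemma isZeroDivisorPair_of_isIdempotentElem {e : R} (he : IsIdempotentElem e) (he1 : e ≠ 1) :
    IsZeroDivisorPair e :=
  ⟨1 - e, 1 - e, sub_ne_zero.mpr he1.symm, sub_ne_zero.mpr he1.symm, he.mul_one_sub_self,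
    he.one_sub_mul_self⟩

lemma isIdempotentElem_of_pow_three_eq_self [IsReduced R] {y : R} (h3 : y ^ 3 = y)
    (h2 : 2 * y = 0) : IsIdempotentElem y := by
  have hsq : (y * y - y) ^ 2 = 0 := by
    calc (y * y - y) ^ 2 = y ^ 3 * y - 2 * y ^ 3 + y * y := by noncomm_ring
      _ = (2 * y) * y - 2 * y := by rw [h3]; noncomm_ring
      _ = 0 := by rw [h2, zero_mul, sub_zero]
  exact sub_eq_zero.mp (eq_zero_of_pow_eq_zero hsq)

lemma isBooleanRing_corner [IsReduced R] (hcube : ∀ x : R, x ^ 3 = x) {e : R}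
    (he : IsIdempotentElem e) (h2 : 2 * e = 0) : IsBooleanRing he.Corner := by
  rintro ⟨_, r, rfl⟩
  exact Subtype.ext (isIdempotentElem_of_pow_three_eq_self (hcube _)
    (by simp only [← mul_assoc, h2, zero_mul])).eq

lemma nonempty_ringEquiv_zmod_three [Nontrivial R] (h3 : (3 : R) = 0)
    (h : ∀ r : R, r = 0 ∨ r = 1 ∨ r = -1) : Nonempty (R ≃+* ZMod 3) := by
  have : CharP R 3 := (CharP.charP_iff_prime_eq_zero Nat.prime_three).mpr (by exact_mod_cast h3)
  refine ⟨(RingEquiv.ofBijective (ZMod.castHom (dvd_refl 3) R)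
    ⟨(ZMod.castHom _ R).injective, fun r => ?_⟩).symm⟩
  rcases h r with rfl | rfl | rfl
  exacts [⟨0, map_zero _⟩, ⟨1, map_one _⟩, ⟨-1, by simp⟩]

end Basic

namespace ZeroDivisorsVeryIdempotentOrNilpotent

variable {R : Type u} [Ring R] (hzd : ZeroDivisorsVeryIdempotentOrNilpotent R)
include hzd

lemma of_ringEquiv {S : Type v} [Ring S] (E : S ≃+* R) :
    ZeroDivisorsVeryIdempotentOrNilpotent S := by
  intro a ha
  rcases hzd _ (ha.map E) with h | h
  · exact .inl (by simpa using h.map E.symm)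
  · exact .inr ((IsNilpotent.map_iff E.injective).mp h)

lemma isNilpotent_of_isZeroDivisorPair (htriv : ∀ e : R, IsIdempotentElem e → e = 0 ∨ e = 1)
    {a : R} (ha : IsZeroDivisorPair a) : IsNilpotent a := by
  rcases hzd a ha with (h | h) | h
  · rcases htriv a h with rfl | rfl
    exacts [.zero, absurd isUnit_one ha.not_isUnit]
  · rcases htriv (-a) h with h | h
    · exact ⟨1, by rw [pow_one, ← neg_eq_zero, h]⟩
    · exact absurd (by rw [← neg_neg a, h]; exact isUnit_one.neg) ha.not_isUnit
  · exact h

-- The corner `e R` alone does not force this (every element of `ℤ/4ℤ` is very idempotent or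
-- nilpotent); the zero-divisor `1 + e`, killed by `2 * e`, does.
lemma two_mul_eq_zero_of_four_mul_eq_zero {e : R} (he : IsIdempotentElem e) (he1 : e ≠ 1)
    (h4 : 4 * e = 0) : 2 * e = 0 := by
  by_contra h2
  have hkill : (1 + e) * (2 * e) = 0 ∧ (2 * e) * (1 + e) = 0 := by
    constructor
    · calc (1 + e) * (2 * e) = 2 * e + 2 * (e * e) := by noncomm_ring
        _ = 0 := by rw [he.eq, ← h4]; noncomm_ring
    · calc (2 * e) * (1 + e) = 2 * e + 2 * (e * e) := by noncomm_ring
        _ = 0 := by rw [he.eq, ← h4]; noncomm_ring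
  have hsq : (1 + e) * (1 + e) = 1 - e := by
    calc (1 + e) * (1 + e) = 1 + 2 * e + e * e := by noncomm_ring
      _ = 1 - e + 4 * e := by rw [he.eq]; noncomm_ring
      _ = 1 - e := by rw [h4, add_zero]
  rcases hzd (1 + e) ⟨2 * e, 2 * e, h2, h2, hkill.1, hkill.2⟩ with (h | h) | h
  · apply h2
    calc 2 * e = (1 + e) - (1 - e) := by noncomm_ring
      _ = 0 := by rw [← hsq, h.eq, sub_self]
  · have h' : (1 + e) * (1 + e) = -(1 + e) := by rw [← neg_mul_neg]; exact h.eq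
    apply h2
    calc 2 * e = ((1 - e) + (1 + e)) * e := by noncomm_ring
      _ = 0 := by rw [← hsq, h', neg_add_cancel, zero_mul]
  · have hf : IsNilpotent (1 - e) := hsq ▸ (Commute.refl _).isNilpotent_mul_left h
    exact he1 (sub_eq_zero.mp (he.one_sub.eq_zero_of_isNilpotent hf)).symm

end ZeroDivisorsVeryIdempotentOrNilpotent

namespace AbelianRing

variable {R : Type u} [Ring R] (hab : AbelianRing R) {e : R}
include hab

lemma of_ringEquiv {S : Type v} [Ring S] (E : S ≃+* R) : AbelianRing S :=
  fun e he x => E.injective (by simpa using hab (E e) (he.map E) (E x))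

lemma isMulCentral (he : IsIdempotentElem e) : IsMulCentral e :=
  Set.mem_center_iff.mp (Semigroup.mem_center_iff.mpr fun x => (hab e he x).symm)

def ringEquivProdCorner (he : IsIdempotentElem e) : R ≃+* he.Corner × he.one_sub.Corner :=
  ((CompleteOrthogonalIdempotents.of_isIdempotentElem he).ringEquivOfIsMulCentral fun i => by
    fin_cases i
    exacts [hab.isMulCentral he, hab.isMulCentral he.one_sub]).trans (RingEquiv.piFinTwo _)

lemma isZeroDivisorPair_mul (he : IsIdempotentElem e) (he1 : e ≠ 1) (x : R) :
    IsZeroDivisorPair (e * x) :=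
  ⟨1 - e, 1 - e, sub_ne_zero.mpr he1.symm, sub_ne_zero.mpr he1.symm,
    by rw [← hab _ he.one_sub, ← mul_assoc, he.one_sub_mul_self, zero_mul],
    by rw [← mul_assoc, he.one_sub_mul_self, zero_mul]⟩

variable (hzd : ZeroDivisorsVeryIdempotentOrNilpotent R)
include hzd

lemma mul_eq_or_eq_neg_of_isUnit (he : IsIdempotentElem e) (he1 : e ≠ 1) {u : R}
    (hu : IsUnit u) : e * u = e ∨ e * u = -e := by
  obtain ⟨u, rfl⟩ := hu
  have hsq : e * u * (e * u) = e * u * u := by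
    rw [mul_assoc, ← mul_assoc (↑u : R), ← hab e he, ← mul_assoc, ← mul_assoc, he.eq]
  rcases hzd _ (hab.isZeroDivisorPair_mul he he1 u) with (h | h) | h
  · exact .inl ((Units.mul_left_inj u).mp (hsq.symm.trans h.eq))
  · refine .inr ((Units.mul_left_inj u).mp ?_)
    rw [← hsq, ← neg_mul_neg, h.eq, neg_mul]
  · left
    have hcomm : Commute e (u : R) := hab e he u
    rw [he.eq_zero_of_isNilpotent ((u.isUnit.isNilpotent_mul_unit_of_commute_iff hcomm).mp h),
      zero_mul]

lemma mul_eq_zero_of_isNilpotent (he : IsIdempotentElem e) (he1 : e ≠ 1) {n : R}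
    (hn : IsNilpotent n) : e * n = 0 := by
  have hplus : e * n = 0 ∨ e * n = -(2 * e) := by
    rcases hab.mul_eq_or_eq_neg_of_isUnit hzd he he1 hn.isUnit_add_one with h | h <;>
      rw [mul_add, mul_one] at h
    · exact .inl (add_eq_right.mp h)
    · exact .inr (by rw [eq_sub_of_add_eq h]; noncomm_ring)
  have hminus : e * n = 0 ∨ e * n = 2 * e := by
    rcases hab.mul_eq_or_eq_neg_of_isUnit hzd he he1 hn.neg.isUnit_add_one with h | h <;>
      rw [mul_add, mul_one, mul_neg] at h
    · exact .inl (neg_eq_zero.mp (add_eq_right.mp h))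
    · exact .inr (by rw [← neg_neg (e * n), eq_sub_of_add_eq h]; noncomm_ring)
  rcases hplus with h | h
  · exact h
  rcases hminus with h' | h'
  · exact h'
  have h4 : 4 * e = 0 := by
    calc 4 * e = 2 * e - -(2 * e) := by noncomm_ring
      _ = 0 := by rw [← h, ← h', sub_self]
  rw [h', hzd.two_mul_eq_zero_of_four_mul_eq_zero he he1 h4]

lemma isReduced (he : IsIdempotentElem e) (he0 : e ≠ 0) (he1 : e ≠ 1) : IsReduced R := by
  refine ⟨fun n hn => ?_⟩
  have hf1 : 1 - e ≠ 1 := fun h => he0 (sub_eq_self.mp h)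
  calc n = e * n + (1 - e) * n := by noncomm_ring
    _ = 0 := by
      rw [hab.mul_eq_zero_of_isNilpotent hzd he he1 hn,
        hab.mul_eq_zero_of_isNilpotent hzd he.one_sub hf1 hn, add_zero]

lemma eq_zero_or_eq_of_three_mul_eq_zero (he : IsIdempotentElem e) (he1 : e ≠ 1)
    (h3 : 3 * e = 0) {a : R} (ha : IsIdempotentElem a) (hea : e * a = a) : a = 0 ∨ a = e := by
  have hinv : (1 + a) * (1 + a) = 1 := by
    calc (1 + a) * (1 + a) = 1 + 3 * e * a + (a * a - a) := by rw [mul_assoc, hea]; noncomm_ring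
      _ = 1 := by rw [h3, ha.eq, zero_mul, sub_self, add_zero, add_zero]
  have hunit : IsUnit (1 + a) := ⟨⟨1 + a, 1 + a, hinv, hinv⟩, rfl⟩
  rcases hab.mul_eq_or_eq_neg_of_isUnit hzd he he1 hunit with h | h <;>
    rw [mul_add, mul_one, hea] at h
  · exact .inl (add_eq_left.mp h)
  · refine .inr ?_
    calc a = e - 3 * e := by rw [eq_sub_of_add_eq' h]; noncomm_ring
      _ = e := by rw [h3, sub_zero]

variable [IsReduced R]

lemma isVeryIdempotent_mul (he : IsIdempotentElem e) (he1 : e ≠ 1) (x : R) :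
    IsVeryIdempotent (e * x) := by
  rcases hzd _ (hab.isZeroDivisorPair_mul he he1 x) with h | h
  · exact h
  · rw [h.eq_zero]
    exact .inl .zero

lemma pow_three_eq_self (he : IsIdempotentElem e) (he0 : e ≠ 0) (he1 : e ≠ 1) (x : R) :
    x ^ 3 = x := by
  have corner : ∀ c : R, IsIdempotentElem c → c ≠ 1 → c * x ^ 3 = c * x := fun c hc hc1 => by
    rw [← (hab.isVeryIdempotent_mul hzd hc hc1 x).pow_three, Commute.mul_pow (hab c hc x),
      hc.pow_succ_eq 2]
  have hf1 : 1 - e ≠ 1 := fun h => he0 (sub_eq_self.mp h)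
  calc x ^ 3 = e * x ^ 3 + (1 - e) * x ^ 3 := by noncomm_ring
    _ = e * x + (1 - e) * x := by rw [corner e he he1, corner (1 - e) he.one_sub hf1]
    _ = x := by noncomm_ring

lemma mul_eq_zero_or_eq_or_eq_neg (he : IsIdempotentElem e) (he1 : e ≠ 1) (h3 : 3 * e = 0)
    (x : R) : e * x = 0 ∨ e * x = e ∨ e * x = -e := by
  have hex : e * (e * x) = e * x := by rw [← mul_assoc, he.eq]
  rcases hab.isVeryIdempotent_mul hzd he he1 x with h | h
  · rcases hab.eq_zero_or_eq_of_three_mul_eq_zero hzd he he1 h3 h hex with h' | h'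
    exacts [.inl h', .inr (.inl h')]
  · rcases hab.eq_zero_or_eq_of_three_mul_eq_zero hzd he he1 h3 h (by rw [mul_neg, hex])
      with h' | h'
    exacts [.inl (neg_eq_zero.mp h'), .inr (.inr (neg_eq_iff_eq_neg.mp h'))]

lemma nonempty_corner_ringEquiv_zmod_three (he : IsIdempotentElem e) (he0 : e ≠ 0) (he1 : e ≠ 1)
    (h3 : 3 * e = 0) : Nonempty (he.Corner ≃+* ZMod 3) := by
  have : Nontrivial he.Corner := ⟨⟨1, 0, fun h => he0 (congrArg Subtype.val h)⟩⟩
  refine nonempty_ringEquiv_zmod_three (Subtype.ext ?_) ?_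
  · rw [show (3 : he.Corner) = 1 + 1 + 1 by norm_num]
    show e + e + e = 0
    rw [← h3]; noncomm_ring
  · rintro ⟨_, r, rfl⟩
    rcases hab.mul_eq_zero_or_eq_or_eq_neg hzd he he1 h3 (r * e) with h | h | h <;>
      simp only [← mul_assoc] at h
    exacts [.inl (Subtype.ext h), .inr (.inl (Subtype.ext h)), .inr (.inr (Subtype.ext h))]

end AbelianRing

theorem AbelianRing.classification_of_isIdempotentElem {R : Type u} [Ring R] (hab : AbelianRing R)
    (hzd : ZeroDivisorsVeryIdempotentOrNilpotent R) {e : R} (he : IsIdempotentElem e)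
    (he0 : e ≠ 0) (he1 : e ≠ 1) :
    (∃ (B : Type u) (_ : Ring B), IsBooleanRing B ∧ Nonempty (R ≃+* B)) ∨
      Nonempty (R ≃+* (ZMod 3 × ZMod 3)) ∨
      (∃ (B : Type u) (_ : Ring B), IsBooleanRing B ∧ Nonempty (R ≃+* (ZMod 3 × B))) := by
  have := hab.isReduced hzd he he0 he1
  have hcube := hab.pow_three_eq_self hzd he he0 he1
  have h6 : (6 : R) = 0 := by
    have h := hcube 2
    norm_num at h
    calc (6 : R) = 8 - 2 := by norm_num
      _ = 0 := by rw [h, sub_self]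
  have hg : IsIdempotentElem (4 : R) := by
    calc (4 : R) * 4 = 4 + 2 * 6 := by norm_num
      _ = 4 := by rw [h6, mul_zero, add_zero]
  have hg3 : 3 * (4 : R) = 0 := by
    calc 3 * (4 : R) = 2 * 6 := by norm_num
      _ = 0 := by rw [h6, mul_zero]
  by_cases hg0 : (4 : R) = 0
  · have h2 : (2 : R) = 0 := by
      calc (2 : R) = 6 - 4 := by norm_num
        _ = 0 := by rw [h6, hg0, sub_zero]
    exact .inl ⟨R, inferInstance, fun x => isIdempotentElem_of_pow_three_eq_self (hcube x)
      (by rw [h2, zero_mul]), ⟨.refl R⟩⟩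
  by_cases hg1 : (4 : R) = 1
  · have h3 : ∀ x : R, 3 * x = 0 := fun x => by
      rw [← one_mul x, ← mul_assoc, ← hg1, hg3, zero_mul]
    have hf0 : 1 - e ≠ 0 := sub_ne_zero.mpr he1.symm
    have hf1 : 1 - e ≠ 1 := fun h => he0 (sub_eq_self.mp h)
    obtain ⟨E₁⟩ := hab.nonempty_corner_ringEquiv_zmod_three hzd he he0 he1 (h3 e)
    obtain ⟨E₂⟩ := hab.nonempty_corner_ringEquiv_zmod_three hzd he.one_sub hf0 hf1 (h3 (1 - e))
    exact .inr (.inl ⟨(hab.ringEquivProdCorner he).trans (E₁.prodCongr E₂)⟩)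
  · have h2 : 2 * (1 - 4 : R) = 0 := by
      calc 2 * (1 - 4 : R) = -6 := by norm_num
        _ = 0 := by rw [h6, neg_zero]
    obtain ⟨E⟩ := hab.nonempty_corner_ringEquiv_zmod_three hzd hg hg0 hg1 hg3
    exact .inr (.inr ⟨_, inferInstance, isBooleanRing_corner hcube hg.one_sub h2,
      ⟨(hab.ringEquivProdCorner hg).trans (E.prodCongr (.refl _))⟩⟩)

lemma abelianRing_of_commRing (R : Type u) [CommRing R] : AbelianRing R :=
  fun e _ x => mul_comm e x

lemma abelianRing_of_forall_isNilpotent {R : Type u} [Ring R]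
    (h : ∀ a : R, IsZeroDivisorPair a → IsNilpotent a) : AbelianRing R := by
  intro e he x
  by_cases he1 : e = 1
  · rw [he1, one_mul, mul_one]
  · rw [he.eq_zero_of_isNilpotent (h e (isZeroDivisorPair_of_isIdempotentElem he he1)),
      zero_mul, mul_zero]

lemma IsBooleanRing.mul_comm {B : Type u} [Ring B] (hB : IsBooleanRing B) (x y : B) :
    x * y = y * x := by
  let _ : BooleanRing B := { (inferInstance : Ring B) with isIdempotentElem := hB }
  exact _root_.mul_comm x y

lemma zeroDivisorsVeryIdempotentOrNilpotent_zmod_three_prod :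
    ZeroDivisorsVeryIdempotentOrNilpotent (ZMod 3 × ZMod 3) := by
  rintro a ⟨b, c, hb, hc, hab0, hca0⟩
  refine .inl ?_
  unfold IsVeryIdempotent IsIdempotentElem
  revert a b c
  decide

theorem stmt12 (R : Type u) [Ring R] :
    (AbelianRing R ∧ ∀ a : R, IsZeroDivisorPair a → (IsVeryIdempotent a ∨ IsNilpotent a)) ↔
      ((∃ (S : Type u) (_ : Ring S),
          (∀ a : S, IsZeroDivisorPair a → IsNilpotent a) ∧ Nonempty (R ≃+* S)) ∨
       (∃ (B : Type u) (_ : Ring B), IsBooleanRing B ∧ Nonempty (R ≃+* B)) ∨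
       Nonempty (R ≃+* (ZMod 3 × ZMod 3)) ∨
       (∃ (B : Type u) (_ : Ring B), IsBooleanRing B ∧ Nonempty (R ≃+* (ZMod 3 × B)))) := by
  constructor
  · rintro ⟨hab, hzd : ZeroDivisorsVeryIdempotentOrNilpotent R⟩
    by_cases htriv : ∀ e : R, IsIdempotentElem e → e = 0 ∨ e = 1
    · exact .inl ⟨R, inferInstance, fun _ => hzd.isNilpotent_of_isZeroDivisorPair htriv,
        ⟨.refl R⟩⟩
    · simp only [not_forall, not_or] at htriv
      obtain ⟨e, he, he0, he1⟩ := htriv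
      exact .inr (hab.classification_of_isIdempotentElem hzd he he0 he1)
  · rintro (⟨S, _, hS, ⟨E⟩⟩ | ⟨B, _, hB, ⟨E⟩⟩ | ⟨⟨E⟩⟩ | ⟨B, _, hB, ⟨E⟩⟩)
    · exact ⟨(abelianRing_of_forall_isNilpotent hS).of_ringEquiv E,
        ZeroDivisorsVeryIdempotentOrNilpotent.of_ringEquiv (fun a ha => .inr (hS a ha)) E⟩
    · exact ⟨AbelianRing.of_ringEquiv (fun e _ x => hB.mul_comm e x) E,
        ZeroDivisorsVeryIdempotentOrNilpotent.of_ringEquiv (fun a _ => .inl (.inl (hB a))) E⟩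
    · exact ⟨(abelianRing_of_commRing _).of_ringEquiv E,
        zeroDivisorsVeryIdempotentOrNilpotent_zmod_three_prod.of_ringEquiv E⟩
    · refine ⟨AbelianRing.of_ringEquiv (fun e _ x => Prod.ext (mul_comm _ _) (hB.mul_comm _ _)) E,
        ZeroDivisorsVeryIdempotentOrNilpotent.of_ringEquiv (fun a _ => .inl ?_) E⟩
      exact (isVeryIdempotent_zmod_three a.1).prod_of_isBooleanRing hB a.2
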